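/- arXiv:cs/0410014 — 7 statements merged into one kernel-verified Lean document; each statement's English description precedes it below -/
import Mathlib

section
/- Let H = {a₁,…,aₙ} be a finite set of atoms and let 𝒜 ⊆ 𝒫(H) be an anti-chain over H. Then the answer sets of the constructed program π_𝒜, when projected onto H (i.e., intersected with H), are exactly the members of 𝒜: the map S ↦ S ∩ H is a bijection between the answer sets of π_𝒜 and the elements of 𝒜. -/
/-- A rule `head ← pos₁,…,posₘ, not neg₁,…, not negₖ` of a normal logic program. -/
structure Rule (α : Type) : Type where
  head : α
  pos : Set α
  neg : Set α

/-- A (normal logic) program is a set of rules. -/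
abbrev Program (α : Type) : Type := Set (Rule α)

/-- `M` is closed under the (definite parts of the) rules of `P`:
whenever all positive body atoms of a rule are in `M`, so is its head. -/
def RuleClosed {α : Type} (P : Program α) (M : Set α) : Prop :=
  ∀ r ∈ P, r.pos ⊆ M → r.head ∈ M

/-- The least model of a definite program, as the intersection of all closed sets. -/
def leastModel {α : Type} (P : Program α) : Set α :=
  ⋂₀ {M | RuleClosed P M}

/-- The Gelfond–Lifschitz reduct `P^S`: delete each rule with a negative literal
`not n` such that `n ∈ S`, and delete all negative literals from the remaining rules. -/
def reduct {α : Type} (P : Program α) (S : Set α) : Program α :=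
  {r' | ∃ r ∈ P, (∀ n ∈ r.neg, n ∉ S) ∧ r' = ⟨r.head, r.pos, ∅⟩}

/-- `S` is an answer set (stable model) of `P` iff `S` equals
the least model of the reduct `P^S`. -/
def IsAnswerSet {α : Type} (P : Program α) (S : Set α) : Prop :=
  S = leastModel (reduct P S)

/-- The set of atoms occurring in a program. -/
def atoms {α : Type} (P : Program α) : Set α :=
  ⋃ r ∈ P, ({r.head} ∪ r.pos ∪ r.neg)

/-- The extended language for the kernel construction: for each atom `h` of the base
language there is `atom h` and a fresh barred atom `bar h`, plus fresh atoms `m` and `bot`. -/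
inductive KAtom (α : Type) : Type
  | atom : α → KAtom α
  | bar : α → KAtom α
  | m : KAtom α
  | bot : KAtom α

/-- The program `π_𝒜` built from a set of atoms `H` and an anti-chain `𝒜` over `H`:
(i) for each `h ∈ H`, the rules `h ← not h̄` and `h̄ ← not h`;
(ii) for each `A ∈ 𝒜`, the rule `m ← not ᾱ₁,…,not ᾱ_r, not ν₁,…,not ν_s`
     where `A = {α₁,…,α_r}` and `H ∖ A = {ν₁,…,ν_s}`;
(iii) the consistency axiom `⊥ ← not ⊥, not m`. -/
def piA {α : Type} (H : Set α) (𝒜 : Set (Set α)) : Program (KAtom α) :=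
  {r | ∃ h ∈ H, r = ⟨KAtom.atom h, ∅, {KAtom.bar h}⟩}
  ∪ {r | ∃ h ∈ H, r = ⟨KAtom.bar h, ∅, {KAtom.atom h}⟩}
  ∪ {r | ∃ A ∈ 𝒜, r = ⟨KAtom.m, ∅, KAtom.bar '' A ∪ KAtom.atom '' (H \ A)⟩}
  ∪ {⟨KAtom.bot, ∅, {KAtom.bot, KAtom.m}⟩}

lemma leastModel_facts {α : Type} (P : Program α) (h : ∀ r ∈ P, r.pos = ∅) :
    leastModel P = {a | ∃ r ∈ P, r.head = a} := by
  apply subset_antisymm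
  · intro a ha
    have h2 : RuleClosed P {a | ∃ r ∈ P, r.head = a} := fun r hr _ => ⟨r, hr, rfl⟩
    exact Set.mem_sInter.1 ha _ h2
  · rintro a ⟨r, hr, rfl⟩
    refine Set.mem_sInter.2 fun M hM => hM r hr ?_
    rw [h r hr]; exact Set.empty_subset M

lemma heads_reduct {α : Type} (P : Program α) (S : Set α) :
    {a | ∃ r' ∈ reduct P S, r'.head = a}
      = {a | ∃ r ∈ P, (∀ n ∈ r.neg, n ∉ S) ∧ r.head = a} := by
  ext a
  constructor
  · rintro ⟨r', ⟨r, hr, hn, rfl⟩, rfl⟩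
    exact ⟨r, hr, hn, rfl⟩
  · rintro ⟨r, hr, hn, rfl⟩
    exact ⟨_, ⟨r, hr, hn, rfl⟩, rfl⟩

lemma lm_reduct_piA {α : Type} (H : Set α) (𝒜 : Set (Set α)) (S : Set (KAtom α)) :
    leastModel (reduct (piA H 𝒜) S) =
      {x | ∃ h ∈ H, KAtom.bar h ∉ S ∧ x = KAtom.atom h}
      ∪ {x | ∃ h ∈ H, KAtom.atom h ∉ S ∧ x = KAtom.bar h}
      ∪ {x | (∃ A ∈ 𝒜, (∀ a ∈ A, KAtom.bar a ∉ S) ∧ (∀ a ∈ H \ A, KAtom.atom a ∉ S)) ∧ x = KAtom.m}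
      ∪ {x | KAtom.bot ∉ S ∧ KAtom.m ∉ S ∧ x = KAtom.bot} := by
  have hpos : ∀ r ∈ reduct (piA H 𝒜) S, r.pos = ∅ := by
    rintro r ⟨s, hs, _, rfl⟩
    have : s.pos = ∅ := by
      rcases hs with ((⟨h, _, rfl⟩ | ⟨h, _, rfl⟩) | ⟨A, _, rfl⟩) | rfl <;> rfl
    simpa using this
  rw [leastModel_facts _ hpos, heads_reduct]
  ext x
  simp only [Set.mem_setOf_eq, Set.mem_union]
  constructor
  · rintro ⟨r, hmem, hneg, rfl⟩
    rcases hmem with ((⟨h, hh, rfl⟩ | ⟨h, hh, rfl⟩) | ⟨A, hA, rfl⟩) | rfl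
    · exact Or.inl (Or.inl (Or.inl ⟨h, hh, hneg _ rfl, rfl⟩))
    · exact Or.inl (Or.inl (Or.inr ⟨h, hh, hneg _ rfl, rfl⟩))
    · refine Or.inl (Or.inr ⟨⟨A, hA, ?_, ?_⟩, rfl⟩)
      · exact fun a ha => hneg _ (Or.inl ⟨a, ha, rfl⟩)
      · exact fun a ha => hneg _ (Or.inr ⟨a, ha, rfl⟩)
    · exact Or.inr ⟨hneg _ (Or.inl rfl), hneg _ (Or.inr rfl), rfl⟩
  · rintro (((⟨h, hh, hb, rfl⟩ | ⟨h, hh, hb, rfl⟩) | ⟨⟨A, hA, h1, h2⟩, rfl⟩) | ⟨h1, h2, rfl⟩)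
    · refine ⟨_, Or.inl (Or.inl (Or.inl ⟨h, hh, rfl⟩)), ?_, rfl⟩
      rintro n rfl; exact hb
    · refine ⟨_, Or.inl (Or.inl (Or.inr ⟨h, hh, rfl⟩)), ?_, rfl⟩
      rintro n rfl; exact hb
    · refine ⟨_, Or.inl (Or.inr ⟨A, hA, rfl⟩), ?_, rfl⟩
      rintro n (⟨a, ha, rfl⟩ | ⟨a, ha, rfl⟩)
      · exact h1 a ha
      · exact h2 a ha
    · refine ⟨_, Or.inr rfl, ?_, rfl⟩
      rintro n (rfl | rfl) <;> assumption

def SA {α : Type} (H A : Set α) : Set (KAtom α) :=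
  KAtom.atom '' A ∪ KAtom.bar '' (H \ A) ∪ {KAtom.m}

lemma mem_SA_atom {α : Type} {H A : Set α} (h : α) :
    KAtom.atom h ∈ SA H A ↔ h ∈ A := by simp [SA]

lemma mem_SA_bar {α : Type} {H A : Set α} (h : α) :
    KAtom.bar h ∈ SA H A ↔ h ∈ H \ A := by simp [SA]

lemma mem_SA_m {α : Type} {H A : Set α} : KAtom.m ∈ SA H A := by simp [SA]

lemma not_mem_SA_bot {α : Type} {H A : Set α} : KAtom.bot ∉ SA H A := by simp [SA]

lemma isAnswerSet_iff {α : Type} (H : Set α) (𝒜 : Set (Set α))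
    (h𝒜 : ∀ A ∈ 𝒜, A ⊆ H) (S : Set (KAtom α)) :
    IsAnswerSet (piA H 𝒜) S ↔ ∃ A ∈ 𝒜, S = SA H A := by
  constructor
  · intro hS
    have hmem := Set.ext_iff.1 (hS.trans (lm_reduct_piA H 𝒜 S))
    have hatom : ∀ h, KAtom.atom h ∈ S ↔ h ∈ H ∧ KAtom.bar h ∉ S := by
      intro h
      rw [hmem]
      simp only [Set.mem_union, Set.mem_setOf_eq]
      constructor
      · rintro (((⟨h', hh', hb', he⟩ | ⟨_, _, _, he⟩) | ⟨_, he⟩) | ⟨_, _, he⟩) <;>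
          first
          | (cases he; exact ⟨hh', hb'⟩)
          | (exact absurd he (by simp))
      · rintro ⟨hh, hb⟩
        exact Or.inl (Or.inl (Or.inl ⟨h, hh, hb, rfl⟩))
    have hbar : ∀ h, KAtom.bar h ∈ S ↔ h ∈ H ∧ KAtom.atom h ∉ S := by
      intro h
      rw [hmem]
      simp only [Set.mem_union, Set.mem_setOf_eq]
      constructor
      · rintro (((⟨_, _, _, he⟩ | ⟨h', hh', hb', he⟩) | ⟨_, he⟩) | ⟨_, _, he⟩) <;>
          first
          | (cases he; exact ⟨hh', hb'⟩)
          | (exact absurd he (by simp))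
      · rintro ⟨hh, hb⟩
        exact Or.inl (Or.inl (Or.inr ⟨h, hh, hb, rfl⟩))
    have hmiff : KAtom.m ∈ S ↔
        ∃ A ∈ 𝒜, (∀ a ∈ A, KAtom.bar a ∉ S) ∧ (∀ a ∈ H \ A, KAtom.atom a ∉ S) := by
      rw [hmem]
      simp only [Set.mem_union, Set.mem_setOf_eq]
      constructor
      · rintro (((⟨_, _, _, he⟩ | ⟨_, _, _, he⟩) | ⟨hc, _⟩) | ⟨_, _, he⟩) <;>
          first
          | exact hc
          | (exact absurd he (by simp))
      · intro hc
        exact Or.inl (Or.inr ⟨hc, trivial⟩)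
    have hbotiff : KAtom.bot ∈ S ↔ KAtom.bot ∉ S ∧ KAtom.m ∉ S := by
      constructor
      · intro hb
        have hb2 := (hmem _).1 hb
        simp only [Set.mem_union, Set.mem_setOf_eq] at hb2
        rcases hb2 with (((⟨_, _, _, he⟩ | ⟨_, _, _, he⟩) | ⟨_, he⟩) | ⟨h1, h2, _⟩) <;>
          first
          | exact ⟨h1, h2⟩
          | (exact absurd he (by simp))
      · rintro ⟨h1, h2⟩
        exact (hmem _).2 (Set.mem_union_right _ ⟨h1, h2, rfl⟩)
    have hbot : KAtom.bot ∉ S := fun hb => (hbotiff.1 hb).1 hb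
    have hm : KAtom.m ∈ S := by
      by_contra hm
      exact hbot (hbotiff.2 ⟨hbot, hm⟩)
    obtain ⟨A, hA, h1, h2⟩ := hmiff.1 hm
    refine ⟨A, hA, ?_⟩
    ext x
    cases x with
    | atom h =>
      rw [mem_SA_atom, hatom]
      constructor
      · rintro ⟨hh, hb⟩
        by_contra hna
        have : KAtom.atom h ∈ S := by
          rw [hatom]; exact ⟨hh, hb⟩
        exact h2 h ⟨hh, hna⟩ this
      · intro ha
        refine ⟨h𝒜 A hA ha, h1 h ha⟩
    | bar h =>
      rw [mem_SA_bar, hbar]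
      constructor
      · rintro ⟨hh, hb⟩
        refine ⟨hh, fun hha => ?_⟩
        exact hb ((hatom h).2 ⟨hh, h1 h hha⟩)
      · rintro ⟨hh, hna⟩
        exact ⟨hh, h2 h ⟨hh, hna⟩⟩
    | m => simp [mem_SA_m, hm]
    | bot => simp [not_mem_SA_bot, hbot]
  · rintro ⟨A, hA, rfl⟩
    have hsub := h𝒜 A hA
    rw [IsAnswerSet, lm_reduct_piA]
    ext x
    cases x with
    | atom h =>
      simp only [mem_SA_atom, Set.mem_union, Set.mem_setOf_eq]
      constructor
      · intro ha
        refine Or.inl (Or.inl (Or.inl ⟨h, hsub ha, ?_, rfl⟩))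
        rw [mem_SA_bar]
        exact fun hd => hd.2 ha
      · rintro (((⟨h', hh', hb', he⟩ | ⟨_, _, _, he⟩) | ⟨_, he⟩) | ⟨_, _, he⟩) <;>
          first
          | (cases he
             rw [mem_SA_bar] at hb'
             by_contra hna
             exact hb' ⟨hh', hna⟩)
          | (exact absurd he (by simp))
    | bar h =>
      simp only [mem_SA_bar, Set.mem_union, Set.mem_setOf_eq]
      constructor
      · rintro ⟨hh, hna⟩
        refine Or.inl (Or.inl (Or.inr ⟨h, hh, ?_, rfl⟩))
        rw [mem_SA_atom]
        exact hna
      · rintro (((⟨_, _, _, he⟩ | ⟨h', hh', hb', he⟩) | ⟨_, he⟩) | ⟨_, _, he⟩) <;>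
          first
          | (cases he
             rw [mem_SA_atom] at hb'
             exact ⟨hh', hb'⟩)
          | (exact absurd he (by simp))
    | m =>
      simp only [Set.mem_union, Set.mem_setOf_eq]
      constructor
      · intro _
        refine Or.inl (Or.inr ⟨⟨A, hA, ?_, ?_⟩, trivial⟩)
        · intro a ha
          rw [mem_SA_bar]
          exact fun hd => hd.2 ha
        · intro a ha
          rw [mem_SA_atom]
          exact ha.2
      · intro _
        exact mem_SA_m
    | bot =>
      simp only [Set.mem_union, Set.mem_setOf_eq]
      constructor
      · intro hb
        exact absurd hb not_mem_SA_bot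
      · rintro (((⟨_, _, _, he⟩ | ⟨_, _, _, he⟩) | ⟨_, he⟩) | ⟨_, h2, _⟩) <;>
          first
          | (exact absurd mem_SA_m h2)
          | (exact absurd he (by simp))

lemma proj_SA {α : Type} {H A : Set α} (hsub : A ⊆ H) :
    KAtom.atom ⁻¹' SA H A ∩ H = A := by
  ext h
  simp only [Set.mem_inter_iff, Set.mem_preimage, mem_SA_atom]
  exact ⟨fun ⟨ha, _⟩ => ha, fun ha => ⟨ha, hsub ha⟩⟩

/-- for a finite set of atoms `H` and an anti-chain `𝒜 ⊆ 𝒫(H)`,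
the map `S ↦ S ∩ H` (projection onto the base language) is a bijection between
the answer sets of `π_𝒜` and the elements of `𝒜`. -/
theorem piA_answer_sets_biject_antichain {α : Type} (H : Set α) (hH : H.Finite)
    (𝒜 : Set (Set α)) (h𝒜 : ∀ A ∈ 𝒜, A ⊆ H)
    (hanti : ∀ A ∈ 𝒜, ∀ B ∈ 𝒜, A ⊆ B → A = B) :
    Set.BijOn (fun S : Set (KAtom α) => KAtom.atom ⁻¹' S ∩ H)
      {S | IsAnswerSet (piA H 𝒜) S} 𝒜 := by
  refine ⟨?_, ?_, ?_⟩
  · intro S hS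
    obtain ⟨A, hA, rfl⟩ := (isAnswerSet_iff H 𝒜 h𝒜 S).1 hS
    simpa [proj_SA (h𝒜 A hA)] using hA
  · intro S hS S' hS' heq
    obtain ⟨A, hA, rfl⟩ := (isAnswerSet_iff H 𝒜 h𝒜 S).1 hS
    obtain ⟨A', hA', rfl⟩ := (isAnswerSet_iff H 𝒜 h𝒜 S').1 hS'
    simp only [proj_SA (h𝒜 A hA), proj_SA (h𝒜 A' hA')] at heq
    rw [heq]
  · intro A hA
    refine ⟨SA H A, (isAnswerSet_iff H 𝒜 h𝒜 (SA H A)).2 ⟨A, hA, rfl⟩, ?_⟩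
    simpa using proj_SA (h𝒜 A hA)
end

section
/- Let H be a finite set of atoms, 𝒜 ⊆ 𝒫(H) an anti-chain, and π_𝒜 the constructed program. If S is an answer set of π_𝒜, then S ∩ H is a member of 𝒜. -/
/-- for a finite set of atoms `H` and an anti-chain `𝒜 ⊆ 𝒫(H)`,
if `S` is an answer set of `π_𝒜`, then `S ∩ H` is a member of `𝒜`. -/
theorem piA_answer_set_projects_into_antichain {α : Type} (H : Set α) (hH : H.Finite)
    (𝒜 : Set (Set α)) (h𝒜 : ∀ A ∈ 𝒜, A ⊆ H)
    (hanti : ∀ A ∈ 𝒜, ∀ B ∈ 𝒜, A ⊆ B → A = B)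
    (S : Set (KAtom α)) (hS : IsAnswerSet (piA H 𝒜) S) :
    KAtom.atom ⁻¹' S ∩ H ∈ 𝒜 := by

  have hpos : ∀ r ∈ piA H 𝒜, r.pos = ∅ := by
    rintro r hr
    rcases hr with ((⟨h, hh, rfl⟩ | ⟨h, hh, rfl⟩) | ⟨A, hA, rfl⟩) | hr
    · rfl
    · rfl
    · rfl
    · simp only [Set.mem_singleton_iff] at hr; subst hr; rfl
  have hmem : ∀ x, x ∈ S ↔ ∃ r ∈ piA H 𝒜, (∀ n ∈ r.neg, n ∉ S) ∧ x = r.head := by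
    intro x
    have hLM : leastModel (reduct (piA H 𝒜) S)
        = {x | ∃ r ∈ piA H 𝒜, (∀ n ∈ r.neg, n ∉ S) ∧ x = r.head} := by
      apply Set.Subset.antisymm
      · apply Set.sInter_subset_of_mem
        rintro r' ⟨r, hr, hneg, rfl⟩ _
        exact ⟨r, hr, hneg, rfl⟩
      · apply Set.subset_sInter
        rintro M hM x ⟨r, hr, hneg, rfl⟩
        exact hM ⟨r.head, r.pos, ∅⟩ ⟨r, hr, hneg, rfl⟩
          (by rw [hpos r hr]; exact Set.empty_subset _)
    conv_lhs => rw [hS, hLM]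
    rfl
  have hbot : KAtom.bot ∉ S := by
    intro hb
    rcases (hmem _).mp hb with ⟨r, hr, hneg, hhead⟩
    rcases hr with ((⟨h, hh, rfl⟩ | ⟨h, hh, rfl⟩) | ⟨A, hA, rfl⟩) | hr
    · simp at hhead
    · simp at hhead
    · simp at hhead
    · simp only [Set.mem_singleton_iff] at hr; subst hr
      exact hneg KAtom.bot (by simp) hb
  have hm : KAtom.m ∈ S := by
    by_contra hmS
    apply hbot
    refine (hmem _).mpr ⟨⟨KAtom.bot, ∅, {KAtom.bot, KAtom.m}⟩, Or.inr rfl, ?_, rfl⟩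
    intro n hn
    rcases hn with rfl | hn
    · exact hbot
    · simp only [Set.mem_singleton_iff] at hn; subst hn; exact hmS
  rcases (hmem _).mp hm with ⟨r, hr, hneg, hhead⟩
  rcases hr with ((⟨h, hh, rfl⟩ | ⟨h, hh, rfl⟩) | ⟨A, hA, rfl⟩) | hr
  · simp at hhead
  · simp at hhead
  · have hAH : A ⊆ H := h𝒜 A hA
    have heq : KAtom.atom ⁻¹' S ∩ H = A := by
      ext x
      constructor
      · rintro ⟨hxS, hxH⟩
        by_contra hxA
        exact hneg (KAtom.atom x) (Or.inr ⟨x, ⟨hxH, hxA⟩, rfl⟩) hxS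
      · intro hxA
        have hbarx : KAtom.bar x ∉ S := hneg _ (Or.inl ⟨x, hxA, rfl⟩)
        refine ⟨?_, hAH hxA⟩
        exact (hmem _).mpr ⟨⟨KAtom.atom x, ∅, {KAtom.bar x}⟩,
          Or.inl (Or.inl (Or.inl ⟨x, hAH hxA, rfl⟩)), by simpa using hbarx, rfl⟩
    rw [heq]; exact hA
  · simp only [Set.mem_singleton_iff] at hr; subst hr; simp at hhead
end

section
/- Let H be a finite set of atoms, 𝒜 ⊆ 𝒫(H) an anti-chain, and π_𝒜 the constructed program. For every component A ∈ 𝒜, the set S = A ∪ { h̄ : h ∈ H ∖ A } ∪ {m} is an answer set of π_𝒜 with S ∩ H = A. -/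
/-- for a finite set of atoms `H` and an anti-chain `𝒜 ⊆ 𝒫(H)`,
for every component `A ∈ 𝒜`, the set `S = A ∪ { h̄ : h ∈ H ∖ A } ∪ {m}`
is an answer set of `π_𝒜` with `S ∩ H = A`. -/
theorem piA_member_gives_answer_set {α : Type} (H : Set α) (hH : H.Finite)
    (𝒜 : Set (Set α)) (h𝒜 : ∀ A ∈ 𝒜, A ⊆ H)
    (hanti : ∀ A ∈ 𝒜, ∀ B ∈ 𝒜, A ⊆ B → A = B)
    (A : Set α) (hA : A ∈ 𝒜) :
    IsAnswerSet (piA H 𝒜)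
      (KAtom.atom '' A ∪ KAtom.bar '' (H \ A) ∪ {KAtom.m}) ∧
    KAtom.atom ⁻¹' (KAtom.atom '' A ∪ KAtom.bar '' (H \ A) ∪ {KAtom.m}) ∩ H = A := by
  set S : Set (KAtom α) := KAtom.atom '' A ∪ KAtom.bar '' (H \ A) ∪ {KAtom.m} with hSdef
  have hS_atom : ∀ x, KAtom.atom x ∈ S ↔ x ∈ A := by
    intro x
    simp [hSdef, Set.mem_union, Set.mem_image]
  have hS_bar : ∀ x, KAtom.bar x ∈ S ↔ x ∈ H \ A := by
    intro x
    simp [hSdef, Set.mem_union, Set.mem_image]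
  have hS_m : KAtom.m ∈ S := by simp [hSdef]
  have hS_bot : KAtom.bot ∉ S := by simp [hSdef]
  constructor
  · -- answer set
    unfold IsAnswerSet
    apply Set.Subset.antisymm
    · -- S ⊆ leastModel
      intro s hs
      intro M hM
      simp only [Set.mem_setOf_eq] at hM
      rcases hs with (⟨x, hx, rfl⟩ | ⟨x, hx, rfl⟩) | hs
      · -- atom x, x ∈ A
        refine hM ⟨KAtom.atom x, ∅, ∅⟩ ?_ (by simp)
        refine ⟨⟨KAtom.atom x, ∅, {KAtom.bar x}⟩, ?_, ?_, rfl⟩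
        · exact Or.inl (Or.inl (Or.inl ⟨x, h𝒜 A hA hx, rfl⟩))
        · intro n hn
          simp only [Set.mem_singleton_iff] at hn
          subst hn
          rw [hS_bar]
          exact fun h => h.2 hx
      · -- bar x, x ∈ H \ A
        refine hM ⟨KAtom.bar x, ∅, ∅⟩ ?_ (by simp)
        refine ⟨⟨KAtom.bar x, ∅, {KAtom.atom x}⟩, ?_, ?_, rfl⟩
        · exact Or.inl (Or.inl (Or.inr ⟨x, hx.1, rfl⟩))
        · intro n hn
          simp only [Set.mem_singleton_iff] at hn
          subst hn
          rw [hS_atom]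
          exact hx.2
      · -- m
        simp only [Set.mem_singleton_iff] at hs
        subst hs
        refine hM ⟨KAtom.m, ∅, ∅⟩ ?_ (by simp)
        refine ⟨⟨KAtom.m, ∅, KAtom.bar '' A ∪ KAtom.atom '' (H \ A)⟩, ?_, ?_, rfl⟩
        · exact Or.inl (Or.inr ⟨A, hA, rfl⟩)
        · rintro n (⟨x, hx, rfl⟩ | ⟨x, hx, rfl⟩)
          · rw [hS_bar]; exact fun h => h.2 hx
          · rw [hS_atom]; exact hx.2
    · -- leastModel ⊆ S: S is closed
      apply Set.sInter_subset_of_mem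
      simp only [Set.mem_setOf_eq]
      rintro r' ⟨r, hr, hneg, rfl⟩ _
      rcases hr with ((⟨x, hxH, rfl⟩ | ⟨x, hxH, rfl⟩) | ⟨B, hB, rfl⟩) | hr
      · -- head atom x
        have : KAtom.bar x ∉ S := hneg _ (by simp)
        rw [hS_bar] at this
        rw [hS_atom]
        by_contra hxA
        exact this ⟨hxH, hxA⟩
      · -- head bar x
        have : KAtom.atom x ∉ S := hneg _ (by simp)
        rw [hS_atom] at this
        rw [hS_bar]
        exact ⟨hxH, this⟩
      · exact Or.inr rfl
      · -- bot rule: m ∈ neg, contradiction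
        simp only [Set.mem_singleton_iff] at hr
        subst hr
        exact absurd hS_m (hneg KAtom.m (by simp))
  · -- S ∩ H = A
    ext x
    simp only [Set.mem_inter_iff, Set.mem_preimage]
    rw [hS_atom]
    exact ⟨fun h => h.1, fun h => ⟨h, h𝒜 A hA h⟩⟩
end

section
/- Let H be a finite set of atoms, 𝒜 ⊆ 𝒫(H) an anti-chain, and π_𝒜 the constructed program. In every answer set S of π_𝒜, exactly one of the rules defining m fires, i.e., there is exactly one component A ∈ 𝒜 such that the body of the corresponding rule m ← not ᾱ₁,…, not ᾱ_r, not ν₁,…, not ν_s is true in S (no ᾱᵢ and no νⱼ belongs to S). In particular, no two distinct rules defining m can fire under the same answer set. -/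
lemma as_mem {α : Type} {P : Program α} {S : Set α} (hS : IsAnswerSet P S)
    {r : Rule α} (hr : r ∈ P) (hpos : r.pos = ∅) (hneg : ∀ n ∈ r.neg, n ∉ S) :
    r.head ∈ S := by
  rw [hS]
  intro M hM
  exact hM ⟨r.head, r.pos, ∅⟩ ⟨r, hr, hneg, rfl⟩ (by simp [hpos])

lemma as_not_mem {α : Type} {P : Program α} {S : Set α} (hS : IsAnswerSet P S)
    {x : α} (hx : ∀ r ∈ P, (∀ n ∈ r.neg, n ∉ S) → r.head ≠ x) :
    x ∉ S := by
  rw [hS]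
  intro hmem
  have h1 : x ∈ {y | y ≠ x} := by
    apply hmem
    rintro r' ⟨r, hr, hn, rfl⟩ _
    exact hx r hr hn
  exact h1 rfl

/-- for a finite set of atoms `H` and an anti-chain `𝒜 ⊆ 𝒫(H)`,
in every answer set `S` of `π_𝒜` exactly one of the rules defining `m` fires:
there is exactly one component `A ∈ 𝒜` such that the body
`not ᾱ₁,…,not ᾱ_r, not ν₁,…,not ν_s` of the corresponding rule is true in `S`
(no `ᾱᵢ` and no `νⱼ` belongs to `S`). -/
theorem piA_exactly_one_m_rule_fires {α : Type} (H : Set α) (hH : H.Finite)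
    (𝒜 : Set (Set α)) (h𝒜 : ∀ A ∈ 𝒜, A ⊆ H)
    (hanti : ∀ A ∈ 𝒜, ∀ B ∈ 𝒜, A ⊆ B → A = B)
    (S : Set (KAtom α)) (hS : IsAnswerSet (piA H 𝒜) S) :
    ∃! A : Set α, A ∈ 𝒜 ∧
      ∀ x ∈ KAtom.bar '' A ∪ KAtom.atom '' (H \ A), x ∉ S := by
  have hconsRule : (⟨KAtom.bot, ∅, {KAtom.bot, KAtom.m}⟩ : Rule (KAtom α)) ∈ piA H 𝒜 :=
    Or.inr rfl
  have hm : KAtom.m ∈ S := by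
    by_contra hm
    by_cases hb : KAtom.bot ∈ S
    · have hnb : KAtom.bot ∉ S := by
        apply as_not_mem hS
        rintro r hr hn
        rcases hr with ((⟨h, hh, rfl⟩ | ⟨h, hh, rfl⟩) | ⟨A, hA, rfl⟩) | hr
        · simp
        · simp
        · simp
        · simp only [Set.mem_singleton_iff] at hr; subst hr
          exact absurd hb (hn KAtom.bot (by simp))
      exact hnb hb
    · refine hb (as_mem hS hconsRule rfl ?_)
      rintro n hn
      simp only [Set.mem_insert_iff, Set.mem_singleton_iff] at hn
      rcases hn with rfl | rfl <;> assumption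
  have hexists : ∃ A ∈ 𝒜, ∀ x ∈ KAtom.bar '' A ∪ KAtom.atom '' (H \ A), x ∉ S := by
    by_contra hno
    push_neg at hno
    have hnm : KAtom.m ∉ S := by
      apply as_not_mem hS
      rintro r hr hn
      rcases hr with ((⟨h, hh, rfl⟩ | ⟨h, hh, rfl⟩) | ⟨A, hA, rfl⟩) | hr
      · simp
      · simp
      · exfalso
        obtain ⟨x, hx, hxS⟩ := hno A hA
        exact (hn x hx) hxS
      · simp only [Set.mem_singleton_iff] at hr; subst hr; simp
    exact hnm hm
  have hsub : ∀ A ∈ 𝒜, ∀ B ∈ 𝒜,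
      (∀ x ∈ KAtom.bar '' A ∪ KAtom.atom '' (H \ A), x ∉ S) →
      (∀ x ∈ KAtom.bar '' B ∪ KAtom.atom '' (H \ B), x ∉ S) → B ⊆ A := by
    intro A hA B hB hAf hBf b hb
    by_contra hbA
    have hbH : b ∈ H := h𝒜 B hB hb
    have hbarb : KAtom.bar b ∉ S := hBf _ (Or.inl ⟨b, hb, rfl⟩)
    have hrule : (⟨KAtom.atom b, ∅, {KAtom.bar b}⟩ : Rule (KAtom α)) ∈ piA H 𝒜 :=
      Or.inl (Or.inl (Or.inl ⟨b, hbH, rfl⟩))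
    have hatomb : KAtom.atom b ∈ S := as_mem hS hrule rfl (by simpa using hbarb)
    exact hAf _ (Or.inr ⟨b, ⟨hbH, hbA⟩, rfl⟩) hatomb
  obtain ⟨A, hA, hAf⟩ := hexists
  refine ⟨A, ⟨hA, hAf⟩, ?_⟩
  rintro B ⟨hB, hBf⟩
  exact Set.Subset.antisymm (hsub A hA B hB hAf hBf) (hsub B hB A hA hBf hAf)
end

section
/- Every (propositional) normal logic program Π over a finite set of atoms admits an equivalent program in kernel normal form: there exists a program K in kernel normal form, over a language extending the atoms of Π, such that the map S ↦ S ∩ Atoms(Π) is a bijection between the answer sets of K and the answer sets of Π. -/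
/-- The Gelfond–Lifschitz operator `γ_P(S)`: the least model of the reduct `P^S`. -/
def gammaOp {α : Type} (P : Program α) (S : Set α) : Set α :=
  leastModel (reduct P S)

/-- The set of true atoms of the well-founded model of `P`: the least fixpoint
of the monotone operator `γ_P ∘ γ_P` (by Knaster–Tarski, the intersection of
its prefixpoints). -/
def wfTrue {α : Type} (P : Program α) : Set α :=
  ⋂₀ {T | gammaOp P (gammaOp P T) ⊆ T}

/-- The set of false atoms of the well-founded model of `P`: the complement of
`γ_P(wfTrue P)` within the atoms of `P`. -/
def wfFalse {α : Type} (P : Program α) : Set α :=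
  atoms P \ gammaOp P (wfTrue P)

/-- `P` is WFS-irreducible: every atom occurring in `P` is undefined
(neither true nor false) in the well-founded model of `P`. -/
def WFSIrreducible {α : Type} (P : Program α) : Prop :=
  ∀ a ∈ atoms P, a ∉ wfTrue P ∧ a ∉ wfFalse P

/-- `P` is in kernel normal form: (1) `P` is WFS-irreducible, (2) every rule body
consists of negative literals only, and (3) every atom occurring in `P` appears in
the body of some rule. -/
def IsKernel {α : Type} (P : Program α) : Prop :=
  WFSIrreducible P ∧
  (∀ r ∈ P, r.pos = ∅) ∧
  (∀ a ∈ atoms P, ∃ r ∈ P, a ∈ r.pos ∪ r.neg)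

namespace KNF

variable {α : Type}

/-- positive copy of an atom -/
def tt (a : α) : Option (Bool × α) := some (true, a)
/-- negative copy of an atom -/
def ff (a : α) : Option (Bool × α) := some (false, a)

lemma tt_inj : Function.Injective (tt (α := α)) := by
  intro a b h; simpa [tt] using h

lemma ff_inj : Function.Injective (ff (α := α)) := by
  intro a b h; simpa [ff] using h

lemma tt_ne_ff (a b : α) : tt a ≠ ff b := by simp [tt, ff]

lemma tt_ne_none (a : α) : tt a ≠ none := by simp [tt]
lemma ff_ne_none (a : α) : ff a ≠ none := by simp [ff]

/-- body of the constraint rule for a candidate set `T` -/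
def cBody (P : Program α) (T : Set α) : Set (Option (Bool × α)) :=
  insert none (ff '' T ∪ tt '' (atoms P \ T))

/-- the kernel program -/
def K (P : Program α) : Program (Option (Bool × α)) :=
  {r | ∃ a ∈ atoms P, r = ⟨tt a, ∅, {ff a}⟩}
  ∪ {r | ∃ a ∈ atoms P, r = ⟨ff a, ∅, {tt a}⟩}
  ∪ {r | ∃ T, T ⊆ atoms P ∧ ¬ IsAnswerSet P T ∧ r = ⟨none, ∅, cBody P T⟩}

lemma mem_K {P : Program α} {r : Rule (Option (Bool × α))} :
    r ∈ K P ↔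
      (∃ a ∈ atoms P, r = ⟨tt a, ∅, {ff a}⟩) ∨
      (∃ a ∈ atoms P, r = ⟨ff a, ∅, {tt a}⟩) ∨
      (∃ T, T ⊆ atoms P ∧ ¬ IsAnswerSet P T ∧ r = ⟨none, ∅, cBody P T⟩) := by
  simp only [K, Set.mem_union, Set.mem_setOf_eq, or_assoc]

lemma K_mem1 {P : Program α} {a : α} (ha : a ∈ atoms P) :
    (⟨tt a, ∅, {ff a}⟩ : Rule (Option (Bool × α))) ∈ K P :=
  mem_K.mpr (Or.inl ⟨a, ha, rfl⟩)

lemma K_mem2 {P : Program α} {a : α} (ha : a ∈ atoms P) :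
    (⟨ff a, ∅, {tt a}⟩ : Rule (Option (Bool × α))) ∈ K P :=
  mem_K.mpr (Or.inr (Or.inl ⟨a, ha, rfl⟩))

lemma K_mem3 {P : Program α} {T : Set α} (hT : T ⊆ atoms P) (hTas : ¬ IsAnswerSet P T) :
    (⟨none, ∅, cBody P T⟩ : Rule (Option (Bool × α))) ∈ K P :=
  mem_K.mpr (Or.inr (Or.inr ⟨T, hT, hTas, rfl⟩))

lemma K_pos_empty (P : Program α) : ∀ r ∈ K P, r.pos = ∅ := by
  intro r hr
  rcases mem_K.mp hr with ⟨a, _, rfl⟩ | ⟨a, _, rfl⟩ | ⟨T, _, _, rfl⟩ <;> rfl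

/-- gamma operator for programs with empty positive bodies -/
lemma gamma_allneg {β : Type} (Q : Program β) (hQ : ∀ r ∈ Q, r.pos = ∅) (S : Set β) :
    gammaOp Q S = {h | ∃ r ∈ Q, (∀ n ∈ r.neg, n ∉ S) ∧ r.head = h} := by
  apply Set.Subset.antisymm
  · apply Set.sInter_subset_of_mem
    rintro r' ⟨r, hr, hneg, rfl⟩ _
    exact ⟨r, hr, hneg, rfl⟩
  · rintro h ⟨r, hr, hneg, rfl⟩ M hM
    refine hM ⟨r.head, r.pos, ∅⟩ ⟨r, hr, hneg, rfl⟩ ?_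
    show r.pos ⊆ M
    rw [hQ r hr]
    exact Set.empty_subset M

/-- explicit form of the gamma operator of K -/
def G (P : Program α) (S : Set (Option (Bool × α))) : Set (Option (Bool × α)) :=
  {x | (∃ a ∈ atoms P, ff a ∉ S ∧ x = tt a) ∨
       (∃ a ∈ atoms P, tt a ∉ S ∧ x = ff a) ∨
       (x = none ∧ ∃ T, T ⊆ atoms P ∧ ¬ IsAnswerSet P T ∧ ∀ n ∈ cBody P T, n ∉ S)}

lemma gammaK (P : Program α) (S : Set (Option (Bool × α))) :
    gammaOp (K P) S = G P S := by
  rw [gamma_allneg (K P) (K_pos_empty P) S]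
  ext x
  constructor
  · rintro ⟨r, hr, hneg, rfl⟩
    rcases mem_K.mp hr with hr | hr | hr
    · obtain ⟨a, ha, rfl⟩ := hr
      exact Or.inl ⟨a, ha, hneg _ rfl, rfl⟩
    · obtain ⟨a, ha, rfl⟩ := hr
      exact Or.inr (Or.inl ⟨a, ha, hneg _ rfl, rfl⟩)
    · obtain ⟨T, hT, hTas, rfl⟩ := hr
      exact Or.inr (Or.inr ⟨rfl, T, hT, hTas, hneg⟩)
  · rintro (⟨a, ha, hfa, rfl⟩ | ⟨a, ha, hta, rfl⟩ | ⟨rfl, T, hT, hTas, hneg⟩)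
    · exact ⟨⟨tt a, ∅, {ff a}⟩, K_mem1 ha, by simpa using hfa, rfl⟩
    · exact ⟨⟨ff a, ∅, {tt a}⟩, K_mem2 ha, by simpa using hta, rfl⟩
    · exact ⟨⟨none, ∅, cBody P T⟩, K_mem3 hT hTas, hneg, rfl⟩

lemma atomsK (P : Program α) : atoms (K P) = G P ∅ := by
  ext x
  simp only [atoms, Set.mem_iUnion]
  constructor
  · rintro ⟨r, hr, hx⟩
    rcases mem_K.mp hr with hr | hr | hr
    · obtain ⟨a, ha, rfl⟩ := hr
      simp only [Set.mem_union, Set.mem_singleton_iff, Set.mem_empty_iff_false, or_false] at hx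
      rcases hx with rfl | rfl
      · exact Or.inl ⟨a, ha, Set.notMem_empty _, rfl⟩
      · exact Or.inr (Or.inl ⟨a, ha, Set.notMem_empty _, rfl⟩)
    · obtain ⟨a, ha, rfl⟩ := hr
      simp only [Set.mem_union, Set.mem_singleton_iff, Set.mem_empty_iff_false, or_false] at hx
      rcases hx with rfl | rfl
      · exact Or.inr (Or.inl ⟨a, ha, Set.notMem_empty _, rfl⟩)
      · exact Or.inl ⟨a, ha, Set.notMem_empty _, rfl⟩
    · obtain ⟨T, hT, hTas, rfl⟩ := hr
      simp only [Set.mem_union, Set.mem_singleton_iff, Set.mem_empty_iff_false, or_false] at hx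
      rcases hx with rfl | hx
      · exact Or.inr (Or.inr ⟨rfl, T, hT, hTas, fun n _ => Set.notMem_empty n⟩)
      · rcases hx with rfl | (⟨a, ha, rfl⟩ | ⟨a, ha, rfl⟩)
        · exact Or.inr (Or.inr ⟨rfl, T, hT, hTas, fun n _ => Set.notMem_empty n⟩)
        · exact Or.inr (Or.inl ⟨a, hT ha, Set.notMem_empty _, rfl⟩)
        · exact Or.inl ⟨a, ha.1, Set.notMem_empty _, rfl⟩
  · rintro (⟨a, ha, _, rfl⟩ | ⟨a, ha, _, rfl⟩ | ⟨rfl, T, hT, hTas, _⟩)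
    · exact ⟨⟨tt a, ∅, {ff a}⟩, K_mem1 ha, by simp⟩
    · exact ⟨⟨ff a, ∅, {tt a}⟩, K_mem2 ha, by simp⟩
    · exact ⟨⟨none, ∅, cBody P T⟩, K_mem3 hT hTas, by simp⟩

lemma mem_G_tt {P : Program α} {S} {a : α} (ha : a ∈ atoms P) (h : ff a ∉ S) :
    tt a ∈ G P S := Or.inl ⟨a, ha, h, rfl⟩

lemma mem_G_ff {P : Program α} {S} {a : α} (ha : a ∈ atoms P) (h : tt a ∉ S) :
    ff a ∈ G P S := Or.inr (Or.inl ⟨a, ha, h, rfl⟩)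

lemma GG_empty (P : Program α) : G P (G P ∅) = ∅ := by
  ext x
  simp only [Set.mem_empty_iff_false, iff_false]
  rintro (⟨a, ha, hfa, rfl⟩ | ⟨a, ha, hta, rfl⟩ | ⟨rfl, T, hT, hTas, hneg⟩)
  · exact hfa (mem_G_ff ha (Set.notMem_empty _))
  · exact hta (mem_G_tt ha (Set.notMem_empty _))
  · exact hneg none (Set.mem_insert _ _)
      (Or.inr (Or.inr ⟨rfl, T, hT, hTas, fun n _ => Set.notMem_empty n⟩))

lemma wfTrueK (P : Program α) : wfTrue (K P) = ∅ := by
  apply Set.eq_empty_of_subset_empty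
  apply Set.sInter_subset_of_mem
  show gammaOp (K P) (gammaOp (K P) ∅) ⊆ ∅
  rw [gammaK, gammaK, GG_empty]

lemma kernelK (P : Program α) : IsKernel (K P) := by
  refine ⟨?_, K_pos_empty P, ?_⟩
  · intro a ha
    constructor
    · rw [wfTrueK]; exact Set.notMem_empty a
    · rw [wfFalse, wfTrueK, gammaK, atomsK]
      rw [show G P (∅ : Set (Option (Bool × α))) \ G P ∅ = ∅ by simp]
      exact Set.notMem_empty a
  · intro a ha
    rw [atomsK] at ha
    rcases ha with ⟨b, hb, _, rfl⟩ | ⟨b, hb, _, rfl⟩ | ⟨rfl, T, hT, hTas, _⟩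
    · exact ⟨⟨ff b, ∅, {tt b}⟩, K_mem2 hb, by simp⟩
    · exact ⟨⟨tt b, ∅, {ff b}⟩, K_mem1 hb, by simp⟩
    · exact ⟨⟨none, ∅, cBody P T⟩, K_mem3 hT hTas,
        Or.inr (Set.mem_insert _ _)⟩

/-- answer sets are contained in the atoms of the program -/
lemma as_subset_atoms {P : Program α} {T : Set α} (h : IsAnswerSet P T) : T ⊆ atoms P := by
  rw [h]
  apply Set.sInter_subset_of_mem
  rintro r' ⟨r, hr, _, rfl⟩ _
  show r.head ∈ atoms P
  exact Set.mem_biUnion hr (Or.inl (Or.inl rfl))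

/-- the answer set of `K P` encoding `T` -/
def sol (P : Program α) (T : Set α) : Set (Option (Bool × α)) :=
  tt '' T ∪ ff '' (atoms P \ T)

lemma mem_sol_tt {P : Program α} {T : Set α} {a : α} :
    tt a ∈ sol P T ↔ a ∈ T := by
  simp only [sol, Set.mem_union, Set.mem_image]
  constructor
  · rintro (⟨b, hb, hba⟩ | ⟨b, hb, hba⟩)
    · rwa [tt_inj hba] at hb
    · exact absurd hba.symm (tt_ne_ff a b)
  · exact fun h => Or.inl ⟨a, h, rfl⟩

lemma mem_sol_ff {P : Program α} {T : Set α} {a : α} :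
    ff a ∈ sol P T ↔ a ∈ atoms P \ T := by
  simp only [sol, Set.mem_union, Set.mem_image]
  constructor
  · rintro (⟨b, hb, hba⟩ | ⟨b, hb, hba⟩)
    · exact absurd hba (tt_ne_ff b a)
    · rwa [ff_inj hba] at hb
  · exact fun h => Or.inr ⟨a, h, rfl⟩

lemma none_not_mem_sol {P : Program α} {T : Set α} : none ∉ sol P T := by
  rintro (⟨b, _, hb⟩ | ⟨b, _, hb⟩)
  · exact tt_ne_none b hb
  · exact ff_ne_none b hb

lemma asK_iff (P : Program α) (S : Set (Option (Bool × α))) :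
    IsAnswerSet (K P) S ↔ ∃ T, IsAnswerSet P T ∧ S = sol P T := by
  have hK : IsAnswerSet (K P) S ↔ S = G P S := by
    rw [IsAnswerSet, ← gammaOp, gammaK]
  rw [hK]
  constructor
  · intro hS
    have hnone : none ∉ S := by
      intro hn
      have : (none : Option (Bool × α)) ∈ G P S := hS ▸ hn
      rcases this with ⟨a, _, _, h⟩ | ⟨a, _, _, h⟩ | ⟨_, T, hT, hTas, hneg⟩
      · exact tt_ne_none a h.symm
      · exact ff_ne_none a h.symm
      · exact hneg none (Set.mem_insert _ _) hn
    set T := {a | a ∈ atoms P ∧ tt a ∈ S} with hTdef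
    have hTsub : T ⊆ atoms P := fun a ha => ha.1
    -- tt a ∈ S ↔ ff a ∉ S for atoms
    have key : ∀ a ∈ atoms P, (tt a ∈ S ↔ ff a ∉ S) := by
      intro a ha
      constructor
      · intro hta hfa
        have : ff a ∈ G P S := hS ▸ hfa
        rcases this with ⟨b, _, _, h⟩ | ⟨b, _, hb, h⟩ | ⟨h, _⟩
        · exact tt_ne_ff b a h.symm
        · exact hb (by rwa [ff_inj h] at hta)
        · exact ff_ne_none a h
      · intro hfa
        exact hS ▸ mem_G_tt ha hfa
    have hTas : IsAnswerSet P T := by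
      by_contra hnot
      apply hnone
      have : (none : Option (Bool × α)) ∈ G P S := by
        refine Or.inr (Or.inr ⟨rfl, T, hTsub, hnot, ?_⟩)
        rintro n (rfl | (⟨a, ha, rfl⟩ | ⟨a, ha, rfl⟩))
        · exact hnone
        · exact (key a ha.1).mp ha.2
        · intro hta
          exact ha.2 ⟨ha.1, hta⟩
      exact hS ▸ this
    refine ⟨T, hTas, ?_⟩
    apply Set.Subset.antisymm
    · intro x hx
      have : x ∈ G P S := hS ▸ hx
      rcases this with ⟨a, ha, hfa, rfl⟩ | ⟨a, ha, hta, rfl⟩ | ⟨rfl, _⟩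
      · exact mem_sol_tt.mpr ⟨ha, hx⟩
      · exact mem_sol_ff.mpr ⟨ha, fun haT => hta haT.2⟩
      · exact absurd hx hnone
    · rintro x (⟨a, ha, rfl⟩ | ⟨a, ha, rfl⟩)
      · exact ha.2
      · exact hS ▸ mem_G_ff ha.1 (fun hta => ha.2 ⟨ha.1, hta⟩)
  · rintro ⟨T, hTas, rfl⟩
    have hTsub := as_subset_atoms hTas
    apply Set.Subset.antisymm
    · rintro x (⟨a, ha, rfl⟩ | ⟨a, ha, rfl⟩)
      · exact mem_G_tt (hTsub ha) (fun h => (mem_sol_ff.mp h).2 ha)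
      · exact mem_G_ff ha.1 (fun h => ha.2 (mem_sol_tt.mp h))
    · rintro x (⟨a, ha, hfa, rfl⟩ | ⟨a, ha, hta, rfl⟩ | ⟨rfl, T', hT', hT'as, hneg⟩)
      · refine mem_sol_tt.mpr ?_
        by_contra haT
        exact hfa (mem_sol_ff.mpr ⟨ha, haT⟩)
      · refine mem_sol_ff.mpr ⟨ha, fun haT => hta (mem_sol_tt.mpr haT)⟩
      · exfalso
        apply hT'as
        have : T' = T := by
          apply Set.Subset.antisymm
          · intro a haT'
            have := hneg (ff a) (Set.mem_insert_iff.mpr (Or.inr (Or.inl ⟨a, haT', rfl⟩)))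
            by_contra haT
            exact this (mem_sol_ff.mpr ⟨hT' haT', haT⟩)
          · intro a haT
            by_contra haT'
            have := hneg (tt a) (Set.mem_insert_iff.mpr (Or.inr (Or.inr ⟨a, ⟨hTsub haT, haT'⟩, rfl⟩)))
            exact this (mem_sol_tt.mpr haT)
        rwa [this]

end KNF

/-- every normal logic program `P` over a finite set of atoms admits an
equivalent program in kernel normal form: there is a program `K` in kernel normal form
over a language `β` extending (via an injection `ι`) the atoms of `P`, such that the map
`S ↦ S ∩ atoms P` is a bijection between the answer sets of `K` and those of `P`. -/
theorem kernel_normal_form_exists {α : Type} (P : Program α)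
    (hfin : (atoms P).Finite) :
    ∃ (β : Type) (ι : α → β) (K : Program β),
      Function.Injective ι ∧ IsKernel K ∧
      Set.BijOn (fun S : Set β => {a ∈ atoms P | ι a ∈ S})
        {S | IsAnswerSet K S} {S | IsAnswerSet P S} := by
  refine ⟨Option (Bool × α), KNF.tt, KNF.K P, KNF.tt_inj, KNF.kernelK P, ?_, ?_, ?_⟩
  · -- MapsTo
    intro S hS
    obtain ⟨T, hTas, rfl⟩ := (KNF.asK_iff P S).mp hS
    have hTsub := KNF.as_subset_atoms hTas
    have : {a ∈ atoms P | KNF.tt a ∈ KNF.sol P T} = T := by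
      ext a
      simp only [Set.mem_setOf_eq, KNF.mem_sol_tt]
      exact ⟨fun h => h.2, fun h => ⟨hTsub h, h⟩⟩
    show {a ∈ atoms P | KNF.tt a ∈ KNF.sol P T} ∈ {S | IsAnswerSet P S}
    rw [this]
    exact hTas
  · -- InjOn
    intro S₁ hS₁ S₂ hS₂ h
    obtain ⟨T₁, hT₁as, rfl⟩ := (KNF.asK_iff P S₁).mp hS₁
    obtain ⟨T₂, hT₂as, rfl⟩ := (KNF.asK_iff P S₂).mp hS₂
    have e₁ : {a ∈ atoms P | KNF.tt a ∈ KNF.sol P T₁} = T₁ := by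
      ext a
      simp only [Set.mem_setOf_eq, KNF.mem_sol_tt]
      exact ⟨fun h => h.2, fun h => ⟨KNF.as_subset_atoms hT₁as h, h⟩⟩
    have e₂ : {a ∈ atoms P | KNF.tt a ∈ KNF.sol P T₂} = T₂ := by
      ext a
      simp only [Set.mem_setOf_eq, KNF.mem_sol_tt]
      exact ⟨fun h => h.2, fun h => ⟨KNF.as_subset_atoms hT₂as h, h⟩⟩
    have : T₁ = T₂ := by rw [← e₁, ← e₂]; exact h
    rw [this]
  · -- SurjOn
    intro T hTas
    refine ⟨KNF.sol P T, (KNF.asK_iff P _).mpr ⟨T, hTas, rfl⟩, ?_⟩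
    ext a
    simp only [Set.mem_setOf_eq, KNF.mem_sol_tt]
    exact ⟨fun h => h.2, fun h => ⟨KNF.as_subset_atoms hTas h, h⟩⟩
end

section
/- Even OR-bridge simplification preserves answer sets up to the language: let Π be a normal logic program containing the rules p ← not λ₁; λ₁ ← not λ₂; …; λₙ ← not a, where n is even, λ₁,…,λₙ are distinct atoms occurring nowhere else in Π, and p and a are atoms distinct from the λᵢ. Let Π' be obtained from Π by deleting these n+1 rules and adding the single rule p ← not a. Then the map S ↦ S ∖ {λ₁,…,λₙ} is a bijection between the answer sets of Π and the answer sets of Π'. -/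
namespace ORB

variable {α : Type}

lemma lm_closed (Q : Program α) : RuleClosed Q (leastModel Q) := by
  intro r hr hpos
  simp only [leastModel, Set.mem_sInter, Set.mem_setOf_eq]
  intro M hM
  exact hM r hr fun x hx => Set.mem_sInter.mp (hpos hx) M hM

lemma lm_le {Q : Program α} {M : Set α} (h : RuleClosed Q M) :
    leastModel Q ⊆ M :=
  Set.sInter_subset_of_mem h

lemma lm_mono {Q Q' : Program α} (h : Q ⊆ Q') :
    leastModel Q ⊆ leastModel Q' :=
  lm_le fun r hr => lm_closed Q' r (h hr)

lemma lm_subset_heads (Q : Program α) :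
    leastModel Q ⊆ {x | ∃ r ∈ Q, r.head = x} :=
  lm_le fun r hr _ => ⟨r, hr, rfl⟩

lemma reduct_union (Q₁ Q₂ : Program α) (S : Set α) :
    reduct (Q₁ ∪ Q₂) S = reduct Q₁ S ∪ reduct Q₂ S := by
  ext r'
  simp only [reduct, Set.mem_setOf_eq, Set.mem_union]
  constructor
  · rintro ⟨r, hr | hr, hneg, rfl⟩
    · exact Or.inl ⟨r, hr, hneg, rfl⟩
    · exact Or.inr ⟨r, hr, hneg, rfl⟩
  · rintro (⟨r, hr, hneg, rfl⟩ | ⟨r, hr, hneg, rfl⟩)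
    · exact ⟨r, Or.inl hr, hneg, rfl⟩
    · exact ⟨r, Or.inr hr, hneg, rfl⟩

lemma reduct_congr {Q : Program α} {S T : Set α}
    (h : ∀ r ∈ Q, ∀ x ∈ r.neg, (x ∈ S ↔ x ∈ T)) :
    reduct Q S = reduct Q T := by
  ext r'
  simp only [reduct, Set.mem_setOf_eq]
  constructor
  · rintro ⟨r, hr, hneg, rfl⟩
    exact ⟨r, hr, fun x hx hxT => hneg x hx ((h r hr x hx).mpr hxT), rfl⟩
  · rintro ⟨r, hr, hneg, rfl⟩
    exact ⟨r, hr, fun x hx hxS => hneg x hx ((h r hr x hx).mp hxS), rfl⟩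

/-- facts with heads in `H` -/
def facts (H : Set α) : Program α := {r | ∃ h ∈ H, r = ⟨h, ∅, ∅⟩}

lemma facts_union (H K : Set α) : facts (H ∪ K) = facts H ∪ facts K := by
  ext r
  simp only [facts, Set.mem_setOf_eq, Set.mem_union]
  constructor
  · rintro ⟨h, hh | hh, rfl⟩
    · exact Or.inl ⟨h, hh, rfl⟩
    · exact Or.inr ⟨h, hh, rfl⟩
  · rintro (⟨h, hh, rfl⟩ | ⟨h, hh, rfl⟩)
    · exact ⟨h, Or.inl hh, rfl⟩
    · exact ⟨h, Or.inr hh, rfl⟩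

lemma lm_union_facts (Q : Program α) (H : Set α)
    (hpos : ∀ r ∈ Q, ∀ x ∈ r.pos, x ∉ H) :
    leastModel (Q ∪ facts H) = leastModel Q ∪ H := by
  apply Set.Subset.antisymm
  · apply lm_le
    rintro r (hr | ⟨h, hh, rfl⟩) hposr
    · exact Or.inl (lm_closed Q r hr fun x hx =>
        ((hposr hx).resolve_right (hpos r hr x hx)))
    · exact Or.inr hh
  · rintro x (hx | hx)
    · exact lm_mono Set.subset_union_left hx
    · exact lm_closed (Q ∪ facts H) ⟨x, ∅, ∅⟩
        (Or.inr ⟨x, hx, rfl⟩) (Set.empty_subset _)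



section Bridge

variable {α : Type} {P : Program α} {p a : α} {n : ℕ} {lam : ℕ → α} {B : Program α}
variable (hn : 0 < n) (heven : Even n) (hlama : lam (n + 1) = a)
    (hinj : Set.InjOn lam (Set.Icc 1 n))
    (hp : p ∉ lam '' Set.Icc 1 n) (ha : a ∉ lam '' Set.Icc 1 n)
    (hB : B = {⟨p, ∅, {lam 1}⟩}
            ∪ {r | ∃ i, 1 ≤ i ∧ i ≤ n ∧ r = ⟨lam i, ∅, {lam (i + 1)}⟩})
    (hBP : B ⊆ P)
    (hnowhere : ∀ i ∈ Set.Icc 1 n, ∀ r ∈ P \ B,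
        lam i ≠ r.head ∧ lam i ∉ r.pos ∧ lam i ∉ r.neg)

include hB hBP hnowhere hinj hp in
lemma stepA {S : Set α} (hS : IsAnswerSet P S) {i : ℕ} (hi1 : 1 ≤ i) (hi2 : i ≤ n) :
    lam i ∈ S ↔ lam (i + 1) ∉ S := by
  constructor
  · intro hiS hi1S
    -- S \ {lam i} is closed under reduct P S
    have hcl : RuleClosed (reduct P S) (S \ {lam i}) := by
      rintro r' ⟨r, hr, hneg, rfl⟩ hposr
      simp only
      have hposS : r.pos ⊆ S := hposr.trans Set.diff_subset
      have hheadS : r.head ∈ S := by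
        have := ORB.lm_closed (reduct P S) ⟨r.head, r.pos, ∅⟩ ⟨r, hr, hneg, rfl⟩
        rw [hS]; rw [hS] at hposS
        exact this hposS
      refine ⟨hheadS, ?_⟩
      simp only [Set.mem_singleton_iff]
      intro hEq
      by_cases hrB : r ∈ B
      · rw [hB] at hrB
        rcases hrB with hrB | ⟨j, hj1, hj2, rfl⟩
        · simp only [Set.mem_singleton_iff] at hrB
          subst hrB
          exact hp ⟨i, ⟨hi1, hi2⟩, hEq.symm⟩
        · simp only at hEq
          have : j = i := hinj ⟨hj1, hj2⟩ ⟨hi1, hi2⟩ hEq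
          subst this
          exact hneg (lam (j + 1)) rfl hi1S
      · exact (hnowhere i ⟨hi1, hi2⟩ r ⟨hr, hrB⟩).1 hEq.symm
    have := ORB.lm_le hcl
    rw [← hS] at this
    exact (this hiS).2 rfl
  · intro hi1S
    have hrule : (⟨lam i, ∅, {lam (i + 1)}⟩ : Rule α) ∈ P := by
      apply hBP; rw [hB]; exact Or.inr ⟨i, hi1, hi2, rfl⟩
    have : (⟨lam i, ∅, ∅⟩ : Rule α) ∈ reduct P S := by
      refine ⟨_, hrule, ?_, rfl⟩
      intro x hx
      simp only [Set.mem_singleton_iff] at hx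
      subst hx; exact hi1S
    have := ORB.lm_closed (reduct P S) _ this (Set.empty_subset _)
    rw [hS]
    exact this

omit hn in
include heven hlama hB hBP hnowhere hinj hp in
lemma parity {S : Set α} (hS : IsAnswerSet P S) :
    ∀ i, 1 ≤ i → i ≤ n →
      (lam i ∈ S ↔ ((Odd i ∧ a ∈ S) ∨ (Even i ∧ a ∉ S))) := by
  have key : ∀ d i, i + d = n + 1 → 1 ≤ i →
      (lam i ∈ S ↔ ((Odd i ∧ a ∈ S) ∨ (Even i ∧ a ∉ S))) := by
    intro d
    induction d with
    | zero =>
      intro i hi _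
      simp only [Nat.add_zero] at hi
      subst hi
      rw [hlama]
      have hodd : Odd (n + 1) := Even.add_one heven
      have hnev : ¬ Even (n + 1) := by simpa [Nat.even_add_one] using heven
      constructor
      · intro h; exact Or.inl ⟨hodd, h⟩
      · rintro (⟨_, h⟩ | ⟨h, _⟩); exact h; exact absurd h hnev
    | succ d ih =>
      intro i hi hi1
      have hi2 : i ≤ n := by omega
      have step := stepA hinj hp hB hBP hnowhere hS hi1 hi2
      have ihh := ih (i + 1) (by omega) (by omega)
      rw [step, ihh]
      have h1 : Odd (i + 1) ↔ ¬ Odd i := by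
        rw [Nat.odd_add_one, Nat.not_odd_iff_even]
      have h2 : Even (i + 1) ↔ ¬ Even i := Nat.even_add_one
      have h3 : Odd i ↔ ¬ Even i := Nat.not_even_iff_odd.symm
      by_cases hA : a ∈ S <;> by_cases hE : Even i <;>
        simp [h1, h2, h3, hA, hE]
  intro i hi1 hi2
  exact key (n + 1 - i) i (by omega) hi1

include hB in
lemma reductB (S : Set α) :
    reduct B S = ORB.facts ({x | x = p ∧ lam 1 ∉ S}
      ∪ {x | ∃ i, 1 ≤ i ∧ i ≤ n ∧ x = lam i ∧ lam (i + 1) ∉ S}) := by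
  subst hB
  ext r'
  simp only [reduct, ORB.facts, Set.mem_setOf_eq, Set.mem_union,
    Set.mem_singleton_iff]
  constructor
  · rintro ⟨r, hr | ⟨i, hi1, hi2, rfl⟩, hneg, rfl⟩
    · subst hr
      exact ⟨p, Or.inl ⟨rfl, hneg (lam 1) rfl⟩, rfl⟩
    · exact ⟨lam i, Or.inr ⟨i, hi1, hi2, rfl, hneg (lam (i + 1)) rfl⟩, rfl⟩
  · rintro ⟨h, hh | ⟨i, hi1, hi2, rfl, hni⟩, rfl⟩
    · refine ⟨⟨p, ∅, {lam 1}⟩, Or.inl rfl, ?_, ?_⟩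
      · intro x hx; simp only [Set.mem_singleton_iff] at hx; subst hx; exact hh.2
      · rw [hh.1]
    · refine ⟨⟨lam i, ∅, {lam (i + 1)}⟩, Or.inr ⟨i, hi1, hi2, rfl⟩, ?_, rfl⟩
      intro x hx; simp only [Set.mem_singleton_iff] at hx; subst hx; exact hni

lemma reduct_single {h b : α} (T : Set α) :
    reduct {(⟨h, ∅, {b}⟩ : Rule α)} T = ORB.facts {x | x = h ∧ b ∉ T} := by
  ext r'
  simp only [reduct, ORB.facts, Set.mem_setOf_eq, Set.mem_singleton_iff]
  constructor
  · rintro ⟨r, rfl, hneg, rfl⟩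
    exact ⟨h, ⟨rfl, hneg b rfl⟩, rfl⟩
  · rintro ⟨x, ⟨hx, hb⟩, rfl⟩
    refine ⟨⟨h, ∅, {b}⟩, rfl, ?_, ?_⟩
    · intro y hy; simp only [Set.mem_singleton_iff] at hy; subst hy; exact hb
    · rw [hx]

omit hn in
include ha hB hBP hnowhere in
lemma main {S : Set α}
    (h1 : lam 1 ∈ S ↔ a ∈ S)
    (h2 : ∀ i, 1 ≤ i → i ≤ n → (lam i ∈ S ↔ lam (i + 1) ∉ S)) :
    leastModel (reduct P S) =
      leastModel (reduct ((P \ B) ∪ {⟨p, ∅, {a}⟩}) (S \ lam '' Set.Icc 1 n))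
        ∪ (S ∩ lam '' Set.Icc 1 n) := by
  set L := lam '' Set.Icc 1 n with hL
  set S' := S \ L with hS'
  have haL : a ∈ S' ↔ a ∈ S := by
    constructor
    · exact fun h => h.1
    · exact fun h => ⟨h, ha⟩
  -- reduct (P \ B) S = reduct (P \ B) S'
  have hPB : reduct (P \ B) S = reduct (P \ B) S' := by
    apply reduct_congr
    intro r hr x hx
    have hxL : x ∉ L := by
      rintro ⟨i, hi, rfl⟩
      exact (hnowhere i hi r hr).2.2 hx
    constructor
    · exact fun h => ⟨h, hxL⟩
    · exact fun h => h.1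
  -- decompose reduct P S
  have hPdec : reduct P S = (reduct (P \ B) S' ∪ ORB.facts {x | x = p ∧ a ∉ S'})
      ∪ ORB.facts (S ∩ L) := by
    have e1 : {x | x = p ∧ lam 1 ∉ S} = {x | x = p ∧ a ∉ S'} := by
      ext x
      simp only [Set.mem_setOf_eq]
      constructor
      · rintro ⟨rfl, hl1⟩
        exact ⟨rfl, fun haS' => hl1 (h1.mpr (haL.mp haS'))⟩
      · rintro ⟨rfl, hna⟩
        exact ⟨rfl, fun hl1 => hna (haL.mpr (h1.mp hl1))⟩
    have e2 : {x | ∃ i, 1 ≤ i ∧ i ≤ n ∧ x = lam i ∧ lam (i + 1) ∉ S} = S ∩ L := by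
      ext x
      simp only [Set.mem_setOf_eq, Set.mem_inter_iff]
      constructor
      · rintro ⟨i, hi1, hi2, rfl, hni⟩
        exact ⟨(h2 i hi1 hi2).mpr hni, ⟨i, ⟨hi1, hi2⟩, rfl⟩⟩
      · rintro ⟨hxS, ⟨i, ⟨hi1, hi2⟩, rfl⟩⟩
        exact ⟨i, hi1, hi2, rfl, (h2 i hi1 hi2).mp hxS⟩
    have hsplit : reduct P S = reduct (P \ B) S ∪ reduct B S := by
      rw [← reduct_union, Set.diff_union_of_subset hBP]
    rw [hsplit, reductB hB, ORB.facts_union, hPB, e1, e2, Set.union_assoc]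
  rw [hPdec]
  rw [ORB.lm_union_facts]
  · congr 1
    rw [reduct_union, reduct_single]
  · rintro r (hr | ⟨h, _, rfl⟩) x hx hxSL
    · obtain ⟨r₀, hr₀, _, rfl⟩ := hr
      obtain ⟨_, ⟨i, hi, rfl⟩⟩ := hxSL
      exact (hnowhere i hi r₀ hr₀).2.1 hx
    · simp only [Set.mem_empty_iff_false] at hx

end Bridge

end ORB

/-- even OR-bridge simplification preserves answer sets up to the language.
`P` contains the rules `p ← not λ₁; λ₁ ← not λ₂; …; λₙ ← not a` (`lam (n+1) = a`),
with `n` even, the `λᵢ` distinct atoms occurring nowhere else in `P`, and `p`, `a`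
distinct from the `λᵢ`. `P'` deletes these `n + 1` rules and adds `p ← not a`.
Then `S ↦ S ∖ {λ₁,…,λₙ}` is a bijection between the answer sets of `P` and of `P'`. -/
theorem even_or_bridge_simplification {α : Type} (P : Program α)
    (p a : α) (n : ℕ) (hn : 0 < n) (heven : Even n)
    (lam : ℕ → α) (hlama : lam (n + 1) = a)
    (hinj : Set.InjOn lam (Set.Icc 1 n))
    (hp : p ∉ lam '' Set.Icc 1 n) (ha : a ∉ lam '' Set.Icc 1 n)
    (B : Program α)
    (hB : B = {⟨p, ∅, {lam 1}⟩}
            ∪ {r | ∃ i, 1 ≤ i ∧ i ≤ n ∧ r = ⟨lam i, ∅, {lam (i + 1)}⟩})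
    (hBP : B ⊆ P)
    (hnowhere : ∀ i ∈ Set.Icc 1 n, ∀ r ∈ P \ B,
        lam i ≠ r.head ∧ lam i ∉ r.pos ∧ lam i ∉ r.neg)
    (P' : Program α) (hP' : P' = (P \ B) ∪ {⟨p, ∅, {a}⟩}) :
    Set.BijOn (fun S : Set α => S \ (lam '' Set.Icc 1 n))
      {S | IsAnswerSet P S} {S | IsAnswerSet P' S} := by
  subst hP'
  set L := lam '' Set.Icc 1 n with hL
  -- no lam i is in any least model of a reduct of P'
  have hLM' : ∀ T : Set α, ∀ i, 1 ≤ i → i ≤ n →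
      lam i ∉ leastModel (reduct ((P \ B) ∪ {⟨p, ∅, {a}⟩}) T) := by
    intro T i hi1 hi2 hmem
    obtain ⟨r', hr', hhead⟩ := ORB.lm_subset_heads _ hmem
    obtain ⟨r, hr, -, rfl⟩ := hr'
    rcases hr with hr | hr
    · exact (hnowhere i ⟨hi1, hi2⟩ r hr).1 hhead.symm
    · simp only [Set.mem_singleton_iff] at hr
      subst hr
      exact hp ⟨i, ⟨hi1, hi2⟩, hhead.symm⟩
  have hmaps : ∀ S, IsAnswerSet P S →
      IsAnswerSet ((P \ B) ∪ {⟨p, ∅, {a}⟩}) (S \ L) := by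
    intro S hS
    have h2 : ∀ i, 1 ≤ i → i ≤ n → (lam i ∈ S ↔ lam (i + 1) ∉ S) :=
      fun i hi1 hi2 => ORB.stepA hinj hp hB hBP hnowhere hS hi1 hi2
    have h1 : lam 1 ∈ S ↔ a ∈ S := by
      rw [ORB.parity heven hlama hinj hp hB hBP hnowhere hS 1 le_rfl hn]
      have h1e : ¬ Even 1 := by decide
      simp [h1e, odd_one]
    have hmain := ORB.main ha hB hBP hnowhere h1 h2
    rw [← hS] at hmain
    show S \ L = leastModel (reduct ((P \ B) ∪ {⟨p, ∅, {a}⟩}) (S \ L))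
    ext x
    constructor
    · rintro ⟨hxS, hxL⟩
      rw [hmain] at hxS
      rcases hxS with h | h
      · exact h
      · exact absurd h.2 hxL
    · intro hx
      have hxL : x ∉ L := by
        rintro ⟨i, hi, rfl⟩
        exact hLM' (S \ L) i hi.1 hi.2 hx
      exact ⟨by rw [hmain]; exact Or.inl hx, hxL⟩
  refine ⟨fun S hS => hmaps S hS, ?_, ?_⟩
  · -- InjOn
    intro S₁ hS₁ S₂ hS₂ hEq
    simp only at hEq
    have haa : a ∈ S₁ ↔ a ∈ S₂ := by
      constructor
      · intro h
        have h' : a ∈ S₁ \ L := ⟨h, ha⟩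
        rw [hEq] at h'; exact h'.1
      · intro h
        have h' : a ∈ S₂ \ L := ⟨h, ha⟩
        rw [← hEq] at h'; exact h'.1
    ext x
    by_cases hxL : x ∈ L
    · obtain ⟨i, hi, rfl⟩ := hxL
      rw [ORB.parity heven hlama hinj hp hB hBP hnowhere hS₁ i hi.1 hi.2,
          ORB.parity heven hlama hinj hp hB hBP hnowhere hS₂ i hi.1 hi.2, haa]
    · constructor
      · intro h
        have h' : x ∈ S₁ \ L := ⟨h, hxL⟩
        rw [hEq] at h'; exact h'.1
      · intro h
        have h' : x ∈ S₂ \ L := ⟨h, hxL⟩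
        rw [← hEq] at h'; exact h'.1
  · -- SurjOn
    intro S' hS'
    simp only [Set.mem_setOf_eq] at hS'
    have hS'eq : S' = leastModel (reduct ((P \ B) ∪ {⟨p, ∅, {a}⟩}) S') := hS'
    have hS'L : ∀ i, 1 ≤ i → i ≤ n → lam i ∉ S' := by
      intro i hi1 hi2 h
      rw [hS'eq] at h
      exact hLM' S' i hi1 hi2 h
    set A := a ∈ S' with hA
    set Λ : Set α :=
      {x | ∃ i, 1 ≤ i ∧ i ≤ n ∧ x = lam i ∧ ((Odd i ∧ A) ∨ (Even i ∧ ¬A))} with hΛ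
    set S := S' ∪ Λ with hSdef
    have hΛL : Λ ⊆ L := by
      rintro x ⟨i, hi1, hi2, rfl, -⟩
      exact ⟨i, ⟨hi1, hi2⟩, rfl⟩
    have haS : a ∈ S ↔ A := by
      constructor
      · rintro (h | h)
        · exact h
        · exact absurd (hΛL h) ha
      · exact fun h => Or.inl h
    have hmem : ∀ i, 1 ≤ i → i ≤ n →
        (lam i ∈ S ↔ ((Odd i ∧ A) ∨ (Even i ∧ ¬A))) := by
      intro i hi1 hi2
      constructor
      · rintro (h | ⟨j, hj1, hj2, hEq, hc⟩)
        · exact absurd h (hS'L i hi1 hi2)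
        · have hji : j = i := hinj ⟨hj1, hj2⟩ ⟨hi1, hi2⟩ hEq.symm
          subst hji; exact hc
      · intro hc; exact Or.inr ⟨i, hi1, hi2, rfl, hc⟩
    have h1 : lam 1 ∈ S ↔ a ∈ S := by
      rw [hmem 1 le_rfl hn, haS]
      have h1e : ¬ Even 1 := by decide
      simp [h1e, odd_one]
    have h2 : ∀ i, 1 ≤ i → i ≤ n → (lam i ∈ S ↔ lam (i + 1) ∉ S) := by
      intro i hi1 hi2
      rcases eq_or_lt_of_le hi2 with rfl | hlt
      · rw [hlama, hmem i hi1 le_rfl, haS]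
        have hno : ¬ Odd i := by simpa [Nat.not_odd_iff_even] using heven
        constructor
        · rintro (⟨h, -⟩ | ⟨-, h⟩) hA'
          · exact hno h
          · exact h hA'
        · intro h; exact Or.inr ⟨heven, h⟩
      · rw [hmem i hi1 hi2, hmem (i + 1) (by omega) hlt]
        have e1 : Odd (i + 1) ↔ ¬ Odd i := by
          rw [Nat.odd_add_one, Nat.not_odd_iff_even]
        have e2 : Even (i + 1) ↔ ¬ Even i := Nat.even_add_one
        have e3 : Odd i ↔ ¬ Even i := Nat.not_even_iff_odd.symm
        by_cases hA' : A <;> by_cases hE : Even i <;> simp [e1, e2, e3, hA', hE]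
    have hmain := ORB.main ha hB hBP hnowhere h1 h2
    have hSL : S \ L = S' := by
      ext x
      constructor
      · rintro ⟨h | h, hxL⟩
        · exact h
        · exact absurd (hΛL h) hxL
      · intro h
        refine ⟨Or.inl h, ?_⟩
        rintro ⟨i, hi, rfl⟩
        exact hS'L i hi.1 hi.2 h
    have hSΛ : S ∩ L = Λ := by
      ext x
      constructor
      · rintro ⟨h | h, hxL⟩
        · obtain ⟨i, hi, rfl⟩ := hxL
          exact absurd h (hS'L i hi.1 hi.2)
        · exact h
      · exact fun h => ⟨Or.inr h, hΛL h⟩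
    rw [hSL, hSΛ, ← hS'eq] at hmain
    refine ⟨S, ?_, hSL⟩
    show S = leastModel (reduct P S)
    rw [hmain]
end

section
/- Even AND-bridge simplification preserves answer sets up to the language: let Π be a normal logic program containing the rules p ← not q, not λ₁; λ₁ ← not λ₂; …; λₙ ← not a, where n is even, λ₁,…,λₙ are distinct atoms occurring nowhere else in Π, and p, q, a are atoms distinct from the λᵢ. Let Π' be obtained from Π by deleting these n+1 rules and adding the single rule p ← not q, not a. Then the map S ↦ S ∖ {λ₁,…,λₙ} is a bijection between the answer sets of Π and the answer sets of Π'. -/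
lemma leastModel_le {α : Type} {P : Program α} {M : Set α} (h : RuleClosed P M) :
    leastModel P ⊆ M :=
  Set.sInter_subset_of_mem h

lemma leastModel_closed {α : Type} (P : Program α) : RuleClosed P (leastModel P) := by
  intro r hr hpos
  intro M hM
  exact hM r hr (hpos.trans (Set.sInter_subset_of_mem hM))

lemma leastModel_subset_heads {α : Type} (P : Program α) :
    leastModel P ⊆ {x | ∃ r ∈ P, r.head = x} :=
  leastModel_le (fun r hr _ => ⟨r, hr, rfl⟩)

lemma reduct_union {α : Type} (P Q : Program α) (S : Set α) :
    reduct (P ∪ Q) S = reduct P S ∪ reduct Q S := by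
  ext r'
  simp only [reduct, Set.mem_setOf_eq, Set.mem_union]
  constructor
  · rintro ⟨r, hr | hr, h1, h2⟩
    · exact Or.inl ⟨r, hr, h1, h2⟩
    · exact Or.inr ⟨r, hr, h1, h2⟩
  · rintro (⟨r, hr, h1, h2⟩ | ⟨r, hr, h1, h2⟩)
    · exact ⟨r, Or.inl hr, h1, h2⟩
    · exact ⟨r, Or.inr hr, h1, h2⟩

lemma reduct_congr {α : Type} {P : Program α} {S T : Set α}
    (h : ∀ r ∈ P, ∀ x ∈ r.neg, (x ∈ S ↔ x ∈ T)) : reduct P S = reduct P T := by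
  ext r'
  simp only [reduct, Set.mem_setOf_eq]
  constructor
  · rintro ⟨r, hr, h1, h2⟩
    exact ⟨r, hr, fun x hx hxT => h1 x hx ((h r hr x hx).mpr hxT), h2⟩
  · rintro ⟨r, hr, h1, h2⟩
    exact ⟨r, hr, fun x hx hxS => h1 x hx ((h r hr x hx).mp hxS), h2⟩

lemma leastModel_union_facts {α : Type} (Q : Program α) (L : Set α)
    (h : ∀ r ∈ Q, ∀ x ∈ L, x ∉ r.pos) :
    leastModel (Q ∪ {r | ∃ x ∈ L, r = ⟨x, ∅, ∅⟩}) = leastModel Q ∪ L := by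
  apply Set.Subset.antisymm
  · apply leastModel_le
    rintro r (hr | ⟨x, hx, rfl⟩) hpos
    · refine Or.inl (leastModel_closed Q r hr (fun y hy => ?_))
      rcases hpos hy with hy' | hy'
      · exact hy'
      · exact absurd hy (h r hr y hy')
    · exact Or.inr hx
  · apply Set.union_subset
    · apply leastModel_le
      intro r hr hpos
      exact leastModel_closed _ r (Or.inl hr) hpos
    · intro x hx
      exact leastModel_closed _ ⟨x, ∅, ∅⟩ (Or.inr ⟨x, hx, rfl⟩) (by simp)

/-- The forced values of the bridge atoms, given the behavior of `a` in `T`. -/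
def bridgeL {α : Type} (a : α) (n : ℕ) (lam : ℕ → α) (T : Set α) : Set α :=
  {x | ∃ i, 1 ≤ i ∧ i ≤ n ∧ (a ∈ T ↔ Odd i) ∧ x = lam i}

/-- even AND-bridge simplification preserves answer sets up to the language.
`P` contains the rules `p ← not q, not λ₁; λ₁ ← not λ₂; …; λₙ ← not a` (`lam (n+1) = a`),
with `n` even, the `λᵢ` distinct atoms occurring nowhere else in `P`, and `p`, `q`, `a`
distinct from the `λᵢ`. `P'` deletes these `n + 1` rules and adds `p ← not q, not a`.
Then `S ↦ S ∖ {λ₁,…,λₙ}` is a bijection between the answer sets of `P` and of `P'`. -/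
theorem even_and_bridge_simplification {α : Type} (P : Program α)
    (p q a : α) (n : ℕ) (hn : 0 < n) (heven : Even n)
    (lam : ℕ → α) (hlama : lam (n + 1) = a)
    (hinj : Set.InjOn lam (Set.Icc 1 n))
    (hp : p ∉ lam '' Set.Icc 1 n) (hq : q ∉ lam '' Set.Icc 1 n)
    (ha : a ∉ lam '' Set.Icc 1 n)
    (B : Program α)
    (hB : B = {⟨p, ∅, {q, lam 1}⟩}
            ∪ {r | ∃ i, 1 ≤ i ∧ i ≤ n ∧ r = ⟨lam i, ∅, {lam (i + 1)}⟩})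
    (hBP : B ⊆ P)
    (hnowhere : ∀ i ∈ Set.Icc 1 n, ∀ r ∈ P \ B,
        lam i ≠ r.head ∧ lam i ∉ r.pos ∧ lam i ∉ r.neg)
    (P' : Program α) (hP' : P' = (P \ B) ∪ {⟨p, ∅, {q, a}⟩}) :
    Set.BijOn (fun S : Set α => S \ (lam '' Set.Icc 1 n))
      {S | IsAnswerSet P S} {S | IsAnswerSet P' S} := by
  classical
  set Λ : Set α := lam '' Set.Icc 1 n with hΛdef
  have hmemΛ : ∀ i, 1 ≤ i → i ≤ n → lam i ∈ Λ :=
    fun i h1 h2 => ⟨i, Set.mem_Icc.mpr ⟨h1, h2⟩, rfl⟩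
  have hLsub : ∀ T : Set α, bridgeL a n lam T ⊆ Λ := by
    rintro T x ⟨i, h1, h2, _, rfl⟩
    exact hmemΛ i h1 h2
  have hlamL : ∀ (T : Set α) (j), 1 ≤ j → j ≤ n →
      (lam j ∈ bridgeL a n lam T ↔ (a ∈ T ↔ Odd j)) := by
    intro T j h1 h2
    constructor
    · rintro ⟨i, hi1, hi2, hio, heq⟩
      have : i = j := hinj (Set.mem_Icc.mpr ⟨hi1, hi2⟩) (Set.mem_Icc.mpr ⟨h1, h2⟩) heq.symm
      rwa [this] at hio
    · intro h
      exact ⟨j, h1, h2, h, rfl⟩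
  have hoddsucc : ∀ i : ℕ, Odd (i + 1) ↔ ¬ Odd i := fun i => Nat.odd_add_one
  have hnoddn : ¬ Odd n := Nat.not_odd_iff_even.mpr heven
  -- the flip lemma: in an answer set of P, lam i ∈ S ↔ lam (i+1) ∉ S
  have hstep : ∀ S : Set α, IsAnswerSet P S → ∀ i, 1 ≤ i → i ≤ n →
      (lam i ∈ S ↔ lam (i + 1) ∉ S) := by
    intro S hS i h1 h2
    constructor
    · intro hmem
      have hm : lam i ∈ leastModel (reduct P S) := by rwa [← hS]
      obtain ⟨r', hr', hhead⟩ := leastModel_subset_heads _ hm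
      obtain ⟨r, hrP, hneg, rfl⟩ := hr'
      simp only at hhead
      by_cases hrB : r ∈ B
      · rw [hB] at hrB
        rcases hrB with hrB | ⟨j, hj1, hj2, rfl⟩
        · rw [Set.mem_singleton_iff] at hrB
          subst hrB
          have hpi : p = lam i := hhead
          rw [hpi] at hp
          exact absurd (hmemΛ i h1 h2) hp
        · simp only at hhead hneg
          have hji : j = i := hinj (Set.mem_Icc.mpr ⟨hj1, hj2⟩) (Set.mem_Icc.mpr ⟨h1, h2⟩) hhead
          subst hji
          exact hneg (lam (j + 1)) rfl
      · exact absurd hhead.symm (hnowhere i (Set.mem_Icc.mpr ⟨h1, h2⟩) r ⟨hrP, hrB⟩).1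
    · intro hneg
      have hrP : (⟨lam i, ∅, {lam (i + 1)}⟩ : Rule α) ∈ P :=
        hBP (by rw [hB]; exact Or.inr ⟨i, h1, h2, rfl⟩)
      have hr' : (⟨lam i, ∅, ∅⟩ : Rule α) ∈ reduct P S := by
        refine ⟨_, hrP, ?_, rfl⟩
        intro x hx
        rw [Set.mem_singleton_iff] at hx
        subst hx
        exact hneg
      have := leastModel_closed (reduct P S) _ hr' (by simp)
      rw [hS]
      exact this
  -- the determination lemma
  have det : ∀ S : Set α, IsAnswerSet P S → ∀ i, 1 ≤ i → i ≤ n →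
      (lam i ∈ S ↔ (a ∈ S ↔ Odd i)) := by
    intro S hS
    have key : ∀ k i, 1 ≤ i → i ≤ n → n - i = k → (lam i ∈ S ↔ (a ∈ S ↔ Odd i)) := by
      intro k
      induction k with
      | zero =>
        intro i h1 h2 hk
        have hin : i = n := by omega
        subst hin
        rw [hstep S hS i h1 h2, hlama]
        constructor
        · intro h; constructor
          · intro h'; exact absurd h' h
          · intro h'; exact absurd h' hnoddn
        · intro h h'; exact hnoddn (h.mp h')
      | succ k ih =>
        intro i h1 h2 hk
        rw [hstep S hS i h1 h2, ih (i + 1) (by omega) (by omega) (by omega)]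
        have := hoddsucc i
        tauto
    intro i h1 h2
    exact key (n - i) i h1 h2 rfl
  -- heads of P' avoid Λ
  have hheads' : ∀ T : Set α, ∀ x ∈ leastModel (reduct P' T), x ∉ Λ := by
    intro T x hx hxΛ
    obtain ⟨r', hr', hhead⟩ := leastModel_subset_heads _ hx
    obtain ⟨r, hrP', hneg, rfl⟩ := hr'
    simp only at hhead
    obtain ⟨i, hi, rfl⟩ := hxΛ
    rw [hP'] at hrP'
    rcases hrP' with hr | hr
    · exact (hnowhere i hi r hr).1 hhead.symm
    · rw [Set.mem_singleton_iff] at hr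
      subst hr
      have hpi : p = lam i := hhead
      rw [hpi] at hp
      exact hp (hmemΛ i (Set.mem_Icc.mp hi).1 (Set.mem_Icc.mp hi).2)
  -- the core computation
  have core : ∀ S' : Set α, (∀ x ∈ S', x ∉ Λ) →
      leastModel (reduct P (S' ∪ bridgeL a n lam S')) =
        leastModel (reduct P' S') ∪ bridgeL a n lam S' := by
    intro S' hd
    set LL := bridgeL a n lam S' with hLLdef
    set S := S' ∪ LL with hSdef
    have hxS : ∀ x, x ∉ Λ → (x ∈ S ↔ x ∈ S') := by
      intro x hx
      constructor
      · rintro (h | h)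
        · exact h
        · exact absurd (hLsub S' h) hx
      · exact Or.inl
    have haS : a ∈ S ↔ a ∈ S' := hxS a ha
    have hqS : q ∈ S ↔ q ∈ S' := hxS q hq
    have hlamS : ∀ j, 1 ≤ j → j ≤ n → (lam j ∈ S ↔ (a ∈ S' ↔ Odd j)) := by
      intro j h1 h2
      constructor
      · rintro (h | h)
        · exact absurd (hmemΛ j h1 h2) (hd _ h)
        · exact (hlamL S' j h1 h2).mp h
      · intro h
        exact Or.inr ((hlamL S' j h1 h2).mpr h)
    have hsuccS : ∀ i, 1 ≤ i → i ≤ n → (lam (i + 1) ∉ S ↔ (a ∈ S' ↔ Odd i)) := by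
      intro i h1 h2
      by_cases hin : i = n
      · subst hin
        rw [hlama, haS]
        constructor
        · intro h
          constructor
          · intro h'; exact absurd h' h
          · intro h'; exact absurd h' hnoddn
        · intro h h'; exact hnoddn (h.mp h')
      · rw [hlamS (i + 1) (by omega) (by omega)]
        have := hoddsucc i
        tauto
    have h1 : reduct (P \ B) S = reduct (P \ B) S' := by
      apply reduct_congr
      intro r hr x hx
      apply hxS
      rintro ⟨i, hi, rfl⟩
      exact (hnowhere i hi r hr).2.2 hx
    have h2 : reduct B S =
        reduct ({⟨p, ∅, {q, a}⟩} : Program α) S' ∪ {r | ∃ x ∈ LL, r = ⟨x, ∅, ∅⟩} := by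
      ext r'
      constructor
      · rintro ⟨r, hrB, hneg, rfl⟩
        rw [hB] at hrB
        rcases hrB with h | ⟨i, hi1, hi2, rfl⟩
        · rw [Set.mem_singleton_iff] at h
          subst h
          left
          refine ⟨⟨p, ∅, {q, a}⟩, rfl, ?_, rfl⟩
          intro x hx
          rcases hx with hx | hx
          · subst hx; exact fun h => hneg x (Or.inl rfl) (hqS.mpr h)
          · rw [Set.mem_singleton_iff] at hx
            subst hx
            have hl1 : lam 1 ∉ S := hneg (lam 1) (Or.inr rfl)
            intro hx
            exact hl1 ((hlamS 1 le_rfl hn).mpr (by simp [hx]))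
        · right
          have hni : lam (i + 1) ∉ S := hneg _ rfl
          exact ⟨lam i, (hlamL S' i hi1 hi2).mpr ((hsuccS i hi1 hi2).mp hni), rfl⟩
      · rintro (⟨r, hr, hneg, rfl⟩ | ⟨x, hxL, rfl⟩)
        · rw [Set.mem_singleton_iff] at hr
          subst hr
          refine ⟨⟨p, ∅, {q, lam 1}⟩, by rw [hB]; exact Or.inl rfl, ?_, rfl⟩
          have hqn : q ∉ S' := hneg q (Or.inl rfl)
          have han : a ∉ S' := hneg a (Or.inr rfl)
          intro x hx
          rcases hx with hx | hx
          · subst hx; exact fun h => hqn (hqS.mp h)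
          · rw [Set.mem_singleton_iff] at hx
            subst hx
            intro hx
            exact han (((hlamS 1 le_rfl hn).mp hx).mpr odd_one)
        · obtain ⟨i, hi1, hi2, hio, rfl⟩ := hxL
          refine ⟨⟨lam i, ∅, {lam (i + 1)}⟩, by rw [hB]; exact Or.inr ⟨i, hi1, hi2, rfl⟩, ?_, rfl⟩
          intro y hy
          rw [Set.mem_singleton_iff] at hy
          subst hy
          exact (hsuccS i hi1 hi2).mpr hio
    have h4 : reduct P S = reduct P' S' ∪ {r | ∃ x ∈ LL, r = ⟨x, ∅, ∅⟩} := by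
      conv_lhs => rw [(Set.diff_union_of_subset hBP).symm]
      rw [reduct_union, h1, h2, hP', reduct_union, Set.union_assoc]
    rw [h4]
    apply leastModel_union_facts
    intro r hr x hx
    obtain ⟨r0, hr0, _, rfl⟩ := hr
    obtain ⟨i, hi1, hi2, _, rfl⟩ := hx
    rw [hP'] at hr0
    rcases hr0 with h | h
    · exact (hnowhere i (Set.mem_Icc.mpr ⟨hi1, hi2⟩) r0 h).2.1
    · rw [Set.mem_singleton_iff] at h
      subst h
      simp
  -- the splitting of answer sets of P
  have hsplit : ∀ S : Set α, IsAnswerSet P S →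
      S = (S \ Λ) ∪ bridgeL a n lam (S \ Λ) := by
    intro S hS
    have haa : a ∈ S \ Λ ↔ a ∈ S := by simp [ha]
    ext x
    constructor
    · intro hx
      by_cases hxΛ : x ∈ Λ
      · right
        obtain ⟨i, hi, rfl⟩ := hxΛ
        obtain ⟨hi1, hi2⟩ := Set.mem_Icc.mp hi
        exact ⟨i, hi1, hi2, by rw [haa]; exact (det S hS i hi1 hi2).mp hx, rfl⟩
      · exact Or.inl ⟨hx, hxΛ⟩
    · rintro (⟨hx, _⟩ | ⟨i, hi1, hi2, hio, rfl⟩)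
      · exact hx
      · exact (det S hS i hi1 hi2).mpr (by rw [← haa]; exact hio)
  constructor
  · -- MapsTo
    intro S hS
    simp only [Set.mem_setOf_eq] at hS ⊢
    have hd : ∀ x ∈ S \ Λ, x ∉ Λ := fun x hx => hx.2
    have hc := core (S \ Λ) hd
    rw [← hsplit S hS] at hc
    have hSeq : S = leastModel (reduct P' (S \ Λ)) ∪ bridgeL a n lam (S \ Λ) :=
      hS.trans hc
    show S \ Λ = leastModel (reduct P' (S \ Λ))
    ext x
    constructor
    · rintro ⟨hxS, hxΛ⟩
      rw [hSeq] at hxS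
      rcases hxS with h | h
      · exact h
      · exact absurd (hLsub _ h) hxΛ
    · intro hx
      exact ⟨by rw [hSeq]; exact Or.inl hx, hheads' _ x hx⟩
  constructor
  · -- InjOn
    intro S1 h1 S2 h2 heq
    simp only [Set.mem_setOf_eq] at h1 h2
    simp only at heq
    have haa : a ∈ S1 ↔ a ∈ S2 := by
      have e1 : a ∈ S1 ↔ a ∈ S1 \ Λ := by simp [ha]
      have e2 : a ∈ S2 ↔ a ∈ S2 \ Λ := by simp [ha]
      rw [e1, e2, heq]
    ext x
    by_cases hxΛ : x ∈ Λ
    · obtain ⟨i, hi, rfl⟩ := hxΛ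
      obtain ⟨hi1, hi2⟩ := Set.mem_Icc.mp hi
      rw [det S1 h1 i hi1 hi2, det S2 h2 i hi1 hi2]
      tauto
    · have e1 : x ∈ S1 ↔ x ∈ S1 \ Λ := by simp [hxΛ]
      have e2 : x ∈ S2 ↔ x ∈ S2 \ Λ := by simp [hxΛ]
      rw [e1, e2, heq]
  · -- SurjOn
    intro S' hS'
    simp only [Set.mem_setOf_eq] at hS'
    have hd : ∀ x ∈ S', x ∉ Λ := by
      intro x hx
      exact hheads' S' x (by rw [← hS']; exact hx)
    have hc := core S' hd
    refine ⟨S' ∪ bridgeL a n lam S', ?_, ?_⟩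
    · show IsAnswerSet P (S' ∪ bridgeL a n lam S')
      rw [IsAnswerSet, hc, ← hS']
    · show (S' ∪ bridgeL a n lam S') \ Λ = S'
      ext x
      constructor
      · rintro ⟨hx | hx, hxΛ⟩
        · exact hx
        · exact absurd (hLsub _ hx) hxΛ
      · intro hx
        exact ⟨Or.inl hx, hd x hx⟩
end
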